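/- Local maxima of DLB: Let n be an even positive integer and ℓ ∈ [1..n/2] an integer. Let x ∈ {0,1}^n be any search point with x_i = 1 for all i ∈ [1..2ℓ−2], x_{2ℓ−1} = x_{2ℓ} = 0, and arbitrary bits x_{2ℓ+1},…,x_n. Then x is a local maximum of DLB with respect to Hamming distance 1: for every y ∈ {0,1}^n differing from x in exactly one bit position, DLB(y) ≤ DLB(x). -/

import Mathlib

/-- Number of leading ones among positions `0, …, n-1` of `x : ℕ → Bool`. -/
def LOn (n : ℕ) (x : ℕ → Bool) : ℕ :=
  ((Finset.range n).filter (fun r => ∀ s ≤ r, x s = true)).card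

/-- The DeceivingLeadingBlocks function (0-based encoding of bit positions):
blocks are `(x (2ℓ), x (2ℓ+1))`; if `x` is not the all-ones string and `m` is the
index of the first non-`11` block, then the value is `2m+1` for a `00` critical
block, `2m` for a `01`/`10` critical block, and `n` for the all-ones string. -/
def DLBn (n : ℕ) (x : ℕ → Bool) : ℕ :=
  if ∀ i < n, x i = true then n
  else if x (2 * (LOn n x / 2)) = false ∧ x (2 * (LOn n x / 2) + 1) = false
    then 2 * (LOn n x / 2) + 1
    else 2 * (LOn n x / 2)

/-- The Honest Leading Blocks function with parameter `δ`:
`HLB_δ(x) = 2m` if `DLB(x) = 2m+1`, `HLB_δ(x) = 2m+2-δ` if `DLB(x) = 2m` (for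
`m ∈ [0..n/2-1]`), and `HLB_δ(x) = n` if `DLB(x) = n`. -/
noncomputable def HLBn (n : ℕ) (δ : ℝ) (x : ℕ → Bool) : ℝ :=
  if ∀ i < n, x i = true then (n : ℝ)
  else if x (2 * (LOn n x / 2)) = false ∧ x (2 * (LOn n x / 2) + 1) = false
    then (2 * (LOn n x / 2) : ℕ)
    else (2 * (LOn n x / 2) : ℕ) + 2 - δ

/-- Extend a bit string `x : Fin n → Bool` to all of `ℕ` (by `false` outside). -/
def toNatFun {n : ℕ} (x : Fin n → Bool) : ℕ → Bool :=
  fun i => if h : i < n then x ⟨i, h⟩ else false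

/-- The LeadingOnes value of a bit string of length `n`. -/
def LO {n : ℕ} (x : Fin n → Bool) : ℕ := LOn n (toNatFun x)

/-- The DeceivingLeadingBlocks value of a bit string of length `n`. -/
def DLB {n : ℕ} (x : Fin n → Bool) : ℕ := DLBn n (toNatFun x)

/-- The Honest Leading Blocks value (parameter `δ`) of a bit string of length `n`. -/
noncomputable def HLB {n : ℕ} (δ : ℝ) (x : Fin n → Bool) : ℝ := HLBn n δ (toNatFun x)

/-!
The critical block of `x` is the `00` block with index `ℓ - 1`, so `DLB x = 2ℓ - 1`. Flipping a
single bit leaves at least one zero in that block, and `DLB` never exceeds `2m + 1` when block `m`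
contains a zero: the leading ones stop there, so the critical block index is at most `m`.
-/

section DLBn

variable {n j : ℕ} {x : ℕ → Bool}

lemma LOn_le_of_eq_false (hj : x j = false) : LOn n x ≤ j := by
  refine (Finset.card_le_card fun r hr => ?_).trans (Finset.card_range j).le
  rw [Finset.mem_filter] at hr
  rw [Finset.mem_range]
  by_contra! hjr
  simp [hr.2 j hjr] at hj

lemma LOn_eq_of_eq_false (hjn : j < n) (hpre : ∀ s < j, x s = true) (hj : x j = false) :
    LOn n x = j := by
  refine le_antisymm (LOn_le_of_eq_false hj) ?_
  refine (Finset.card_range j).ge.trans (Finset.card_le_card fun r hr => ?_)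
  rw [Finset.mem_range] at hr
  exact Finset.mem_filter.2 ⟨Finset.mem_range.2 (hr.trans hjn), fun s hs => hpre s (by omega)⟩

lemma not_forall_eq_true_of_eq_false (hjn : j < n) (hj : x j = false) :
    ¬∀ i < n, x i = true := fun h => by simp [h j hjn] at hj

lemma DLBn_le_of_eq_false (hjn : j < n) (hj : x j = false) : DLBn n x ≤ 2 * (j / 2) + 1 := by
  have hLO := LOn_le_of_eq_false (n := n) hj
  rw [DLBn, if_neg (not_forall_eq_true_of_eq_false hjn hj)]
  split <;> omega

lemma DLBn_of_zero_block {m : ℕ} (hm : 2 * m + 1 < n) (hpre : ∀ s < 2 * m, x s = true)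
    (h0 : x (2 * m) = false) (h1 : x (2 * m + 1) = false) : DLBn n x = 2 * m + 1 := by
  rw [DLBn, if_neg (not_forall_eq_true_of_eq_false (by omega) h0),
    LOn_eq_of_eq_false (by omega) hpre h0, Nat.mul_div_cancel_left m two_pos, if_pos ⟨h0, h1⟩]

end DLBn

section toNatFun

variable {n : ℕ}

lemma toNatFun_of_lt (x : Fin n → Bool) {s : ℕ} (hs : s < n) : toNatFun x s = x ⟨s, hs⟩ :=
  dif_pos hs

lemma toNatFun_update_of_ne (x : Fin n → Bool) (i : Fin n) (b : Bool) {s : ℕ} (hs : s ≠ i) :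
    toNatFun (Function.update x i b) s = toNatFun x s := by
  unfold toNatFun
  split_ifs with h
  · exact Function.update_of_ne (Fin.ne_of_val_ne (i := ⟨s, h⟩) hs) b x
  · rfl

end toNatFun

/-- **Local maxima of DLB.** Let `n` be an even positive integer and
`ℓ ∈ [1..n/2]`. Every search point `x` whose first `2ℓ-2` bits are `1`, whose
bits at (1-based) positions `2ℓ-1` and `2ℓ` are `0`, and whose remaining bits
are arbitrary, is a local maximum of `DLB` with respect to Hamming distance 1:
every `y` obtained from `x` by flipping exactly one bit satisfies
`DLB y ≤ DLB x`. -/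
theorem DLB_local_maximum (n ℓ : ℕ)
    (hℓ1 : 1 ≤ ℓ) (hℓ2 : 2 * ℓ ≤ n)
    (x : Fin n → Bool)
    (hpre : ∀ i : Fin n, (i : ℕ) < 2 * ℓ - 2 → x i = true)
    (h1 : x ⟨2 * ℓ - 2, by omega⟩ = false)
    (h2 : x ⟨2 * ℓ - 1, by omega⟩ = false) :
    ∀ i : Fin n, DLB (Function.update x i (!(x i))) ≤ DLB x := by
  intro i
  obtain ⟨m, rfl⟩ : ∃ m, ℓ = m + 1 := ⟨ℓ - 1, by omega⟩
  have hx_pre : ∀ s < 2 * m, toNatFun x s = true := fun s hs =>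
    (toNatFun_of_lt x (by omega)).trans (hpre ⟨s, by omega⟩ (by simp only; omega))
  have hx0 : toNatFun x (2 * m) = false := by
    have := (toNatFun_of_lt x _).trans h1
    rwa [show 2 * (m + 1) - 2 = 2 * m by omega] at this
  have hx1 : toNatFun x (2 * m + 1) = false := by
    have := (toNatFun_of_lt x _).trans h2
    rwa [show 2 * (m + 1) - 1 = 2 * m + 1 by omega] at this
  obtain ⟨j, hjm, hjn, hj⟩ : ∃ j, j / 2 = m ∧ j < n ∧
      toNatFun (Function.update x i (!(x i))) j = false := by
    by_cases hi : (i : ℕ) = 2 * m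
    · exact ⟨2 * m + 1, by omega, by omega, by rwa [toNatFun_update_of_ne _ _ _ (by omega)]⟩
    · exact ⟨2 * m, by omega, by omega, by rwa [toNatFun_update_of_ne _ _ _ (Ne.symm hi)]⟩
  calc DLB (Function.update x i (!(x i))) ≤ 2 * (j / 2) + 1 := DLBn_le_of_eq_false hjn hj
    _ = DLB x := by rw [hjm, DLB, DLBn_of_zero_block (by omega) hx_pre hx0 hx1]
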